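/- Let (A, ∘, •) be a totally compatible di-algebra over a commutative ring k. For all natural numbers i, j, k', l, every list x₀, …, x_{i+j} of i+j+1 elements of A and every list y₀, …, y_{k'+l} of k'+l+1 elements of A, one has μ_{i,j}(x₀,…,x_{i+j}) • μ_{k',l}(y₀,…,y_{k'+l}) = μ_{i+k', j+l+1}(x₀,…,x_{i+j}, y₀,…,y_{k'+l}). -/
import Mathlib


/-- A pair of `k`-bilinear operations `a` ("∘") and `b` ("•") on a `k`-module `A`
is a *totally compatible di-algebra structure* if `a` and `b` are each associative
and `(x∘y)•z = x∘(y•z) = (x•y)∘z = x•(y∘z)` for all `x y z`. -/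
def IsTotallyCompatibleDialgebra {k A : Type*} [CommRing k] [AddCommGroup A] [Module k A]
    (a b : A →ₗ[k] A →ₗ[k] A) : Prop :=
  (∀ x y z : A, a (a x y) z = a x (a y z)) ∧
  (∀ x y z : A, b (b x y) z = b x (b y z)) ∧
  (∀ x y z : A, b (a x y) z = a x (b y z)) ∧
  (∀ x y z : A, a x (b y z) = a (b x y) z) ∧
  (∀ x y z : A, a (b x y) z = b x (a y z))

/-- The left-associated product `(⋯((x₀ op₁ x₁) op₂ x₂) ⋯ opₙ xₙ)`, where the
operations are recorded as booleans paired with the elements: `true` stands for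
the operation `a` ("∘") and `false` for `b` ("•"). -/
def leftAssocProd {k A : Type*} [CommRing k] [AddCommGroup A] [Module k A]
    (a b : A →ₗ[k] A →ₗ[k] A) (x₀ : A) (l : List (Bool × A)) : A :=
  l.foldl (fun acc p => if p.1 then a acc p.2 else b acc p.2) x₀

/-- The operation `μ_{i,j}` of a totally compatible di-algebra, applied to a list
`x₀ :: [x₁, …, x_{i+j}]` of `i + j + 1` elements:
`μ_{i,j}(x₀,…,x_{i+j}) = (((x₀ ∘ x₁) ∘ ⋯ ∘ x_i) • x_{i+1}) • ⋯ • x_{i+j}`,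
the left-associated product whose first `i` operations are `∘` (i.e. `a`) and
whose last `j` operations are `•` (i.e. `b`).  (On the empty list, which never
occurs under the length hypotheses below, it is defined to be `0`.) -/
def muOp {k A : Type*} [CommRing k] [AddCommGroup A] [Module k A]
    (a b : A →ₗ[k] A →ₗ[k] A) (i j : ℕ) : List A → A
  | [] => 0
  | x₀ :: xs => leftAssocProd a b x₀ ((List.replicate i true ++ List.replicate j false).zip xs)

section Helpers
variable {k A : Type*} [CommRing k] [AddCommGroup A] [Module k A]
  (a b : A →ₗ[k] A →ₗ[k] A)

lemma leftAssocProd_cons (x : A) (p : Bool × A) (l : List (Bool × A)) :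
    leftAssocProd a b x (p :: l)
      = leftAssocProd a b (if p.1 then a x p.2 else b x p.2) l := rfl

lemma leftAssocProd_append (x : A) (l₁ l₂ : List (Bool × A)) :
    leftAssocProd a b x (l₁ ++ l₂)
      = leftAssocProd a b (leftAssocProd a b x l₁) l₂ := by
  simp [leftAssocProd, List.foldl_append]

lemma leftAssocProd_perm (h : IsTotallyCompatibleDialgebra a b) {s t : List Bool}
    (hp : s.Perm t) : ∀ (x : A) (zs : List A), s.length ≤ zs.length →
    leftAssocProd a b x (s.zip zs) = leftAssocProd a b x (t.zip zs) := by
  induction hp with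
  | nil => intro x zs _; rfl
  | cons c _ ih =>
    intro x zs hlen
    cases zs with
    | nil => simp at hlen
    | cons z zs =>
      simp only [List.zip_cons_cons, leftAssocProd_cons]
      exact ih _ zs (by simpa using hlen)
  | swap c d l =>
    intro x zs hlen
    rcases zs with _ | ⟨z1, _ | ⟨z2, zs⟩⟩
    · simp at hlen
    · simp at hlen
    · obtain ⟨h1, h2, h3, h4, h5⟩ := h
      simp only [List.zip_cons_cons, leftAssocProd_cons]
      congr 1
      cases c <;> cases d <;> simp only [if_true, if_false]
      · exact (h3 x z1 z2).trans (h4 x z1 z2)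
      · exact ((h3 x z1 z2).trans (h4 x z1 z2)).symm
  | trans p1 p2 ih1 ih2 =>
    intro x zs hlen
    rw [ih1 x zs hlen, ih2 x zs (p1.length_eq ▸ hlen)]

lemma b_leftAssocProd (h : IsTotallyCompatibleDialgebra a b) :
    ∀ (m : List (Bool × A)) (x y : A),
    b x (leftAssocProd a b y m) = leftAssocProd a b (b x y) m := by
  obtain ⟨h1, h2, h3, h4, h5⟩ := h
  intro m
  induction m using List.reverseRecOn with
  | nil => intro x y; rfl
  | append_singleton m p ih =>
    intro x y
    rcases p with ⟨c, v⟩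
    rw [leftAssocProd_append, leftAssocProd_append]
    cases c
    · show b x (b (leftAssocProd a b y m) v) = b (leftAssocProd a b (b x y) m) v
      rw [← h2, ih]
    · show b x (a (leftAssocProd a b y m) v) = a (leftAssocProd a b (b x y) m) v
      rw [← h5, ih]

end Helpers

/-- `μ_{i,j}(x₀,…,x_{i+j}) • μ_{k',l}(y₀,…,y_{k'+l})
  = μ_{i+k', j+l+1}(x₀,…,x_{i+j}, y₀,…,y_{k'+l})`. -/
theorem muOp_comp_right
    {k A : Type*} [CommRing k] [AddCommGroup A] [Module k A]
    (a b : A →ₗ[k] A →ₗ[k] A) (h : IsTotallyCompatibleDialgebra a b)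
    (i j k' l : ℕ) (x₀ : A) (xs : List A) (hx : xs.length = i + j)
    (y₀ : A) (ys : List A) (hy : ys.length = k' + l) :
    b (muOp a b i j (x₀ :: xs)) (muOp a b k' l (y₀ :: ys))
      = muOp a b (i + k') (j + l + 1) (x₀ :: (xs ++ y₀ :: ys)) := by
  have hsxlen : (List.replicate i true ++ List.replicate j false).length = xs.length := by
    simp [hx]
  have hperm : ((List.replicate i true ++ List.replicate j false)
        ++ false :: (List.replicate k' true ++ List.replicate l false)).Perm
      (List.replicate (i + k') true ++ List.replicate (j + l + 1) false) := by
    apply List.perm_iff_count.mpr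
    intro c
    cases c <;> simp [List.count_append, List.count_replicate] <;> omega
  have hlen : ((List.replicate i true ++ List.replicate j false)
        ++ false :: (List.replicate k' true ++ List.replicate l false)).length
      ≤ (xs ++ y₀ :: ys).length := by
    simp [hx, hy]; omega
  simp only [muOp]
  rw [← leftAssocProd_perm a b h hperm x₀ (xs ++ y₀ :: ys) hlen,
    List.zip_append hsxlen, List.zip_cons_cons, leftAssocProd_append,
    leftAssocProd_cons, b_leftAssocProd a b h]
  rfl
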